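/- arXiv:2106.08291 — 4 statements merged into one kernel-verified Lean document; each statement's English description precedes it below -/
import Mathlib

section
/- Let (a_n) be a positive increasing sequence with a_{n-1}/a_n = O(n^{-σ}) for some σ > 0, let C > 0 be a real constant and P a polynomial with positive coefficients. Then for any fixed n₀, ∑_{k=n₀}^{n} C^k P(k) a_{n-k} = O(a_{n-n₀}) as n → ∞. -/
/-!
Since `a (n - 1) / a n → 0`, for every `ε > 0` the sequence eventually grows at least like `ε⁻ⁿ`,
and by monotonicity `a i ≤ K ε ^ (m - i) a m` for all `i ≤ m` once `m` is large. The weights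
`C ^ k P(k)` grow at most like `Rᵏ` with `R = 2C`, so with `ε R ≤ 1/2` the convolution is dominated
by `a (n - n₀)` times a convergent geometric series.
-/

open Filter Asymptotics Finset Topology Polynomial

theorem le_pow_mul_add_of_le_mul_succ {a : ℕ → ℝ} {ε : ℝ} {N : ℕ} (hε : 0 ≤ ε)
    (hstep : ∀ m ≥ N, a m ≤ ε * a (m + 1)) {m : ℕ} (hm : N ≤ m) (t : ℕ) :
    a m ≤ ε ^ t * a (m + t) := by
  induction t with
  | zero => simp
  | succ t ih =>
    calc a m ≤ ε ^ t * a (m + t) := ih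
      _ ≤ ε ^ t * (ε * a (m + t + 1)) := by gcongr; exact hstep _ (by omega)
      _ = ε ^ (t + 1) * a (m + (t + 1)) := by ring_nf

theorem exists_le_mul_pow_mul_of_tendsto_div_succ {a : ℕ → ℝ} (hpos : ∀ n, 0 < a n)
    (hmono : Monotone a) (hratio : Tendsto (fun n => a n / a (n + 1)) atTop (𝓝 0))
    {ε : ℝ} (hε : 0 < ε) (hε1 : ε ≤ 1) :
    ∃ K ≥ 0, ∀ᶠ m in atTop, ∀ i ≤ m, a i ≤ K * ε ^ (m - i) * a m := by
  obtain ⟨N, hN⟩ := eventually_atTop.1 (hratio.eventually (ge_mem_nhds hε))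
  have hstep : ∀ m ≥ N, a m ≤ ε * a (m + 1) := fun m hm =>
    (div_le_iff₀ (hpos _)).1 (hN m hm)
  refine ⟨(ε ^ N)⁻¹, by positivity, eventually_atTop.2 ⟨N, fun m hm i hi => ?_⟩⟩
  have hpow : ε ^ N * ε ^ (m - max i N) ≤ ε ^ (m - i) := by
    rw [← pow_add]
    exact pow_le_pow_of_le_one hε.le hε1 (by omega)
  calc a i ≤ a (max i N) := hmono (le_max_left i N)
    _ ≤ ε ^ (m - max i N) * a m := by
      simpa [Nat.add_sub_cancel' (max_le hi hm)] using
        le_pow_mul_add_of_le_mul_succ hε.le hstep (le_max_right i N) (m - max i N)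
    _ ≤ (ε ^ N)⁻¹ * ε ^ (m - i) * a m := by
      have := hpos m
      gcongr
      rwa [le_inv_mul_iff₀ (by positivity)]

theorem sum_Icc_pow_sub_le_two {r : ℝ} (hr0 : 0 ≤ r) (hr : r ≤ 1 / 2) (n₀ n : ℕ) :
    ∑ k ∈ Icc n₀ n, r ^ (k - n₀) ≤ 2 :=
  calc ∑ k ∈ Icc n₀ n, r ^ (k - n₀) ≤ ∑ k ∈ Icc n₀ n, (1 / 2 : ℝ) ^ (k - n₀) := by gcongr
    _ = ∑ j ∈ range (n + 1 - n₀), (1 / 2 : ℝ) ^ j := by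
      rw [← Ico_add_one_right_eq_Icc, sum_Ico_eq_sum_range]
      simp
    _ ≤ 2 := sum_geometric_two_le _

theorem isBigO_sum_Icc_mul_sub {a g : ℕ → ℝ} {R : ℝ} (hpos : ∀ n, 0 < a n) (hmono : Monotone a)
    (hratio : Tendsto (fun n => a n / a (n + 1)) atTop (𝓝 0)) (hR : 0 < R)
    (hg : g =O[atTop] fun k => R ^ k) (n₀ : ℕ) :
    (fun n => ∑ k ∈ Icc n₀ n, g k * a (n - k)) =O[atTop] fun n => a (n - n₀) := by
  obtain ⟨c, hc⟩ := (isBigO_cofinite_iff fun k hk => absurd hk (pow_ne_zero k hR.ne')).1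
    (Nat.cofinite_eq_atTop ▸ hg)
  have hc0 : 0 ≤ c := by simpa using (norm_nonneg _).trans (hc 0)
  set ε := min 1 (2 * R)⁻¹
  have hε : 0 < ε := by positivity
  have hRε : R * ε ≤ 1 / 2 := by
    calc R * ε ≤ R * (2 * R)⁻¹ := by gcongr; exact min_le_right _ _
      _ = 1 / 2 := by field_simp
  obtain ⟨K, hK0, hK⟩ :=
    exists_le_mul_pow_mul_of_tendsto_div_succ hpos hmono hratio hε (min_le_left _ _)
  refine isBigO_iff.2 ⟨2 * (c * K * R ^ n₀), ?_⟩
  filter_upwards [eventually_ge_atTop n₀, (tendsto_sub_atTop_nat n₀).eventually hK] with n hn hKn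
  have hterm : ∀ k ∈ Icc n₀ n,
      ‖g k * a (n - k)‖ ≤ c * K * R ^ n₀ * a (n - n₀) * (R * ε) ^ (k - n₀) := by
    intro k hk
    obtain ⟨hk₀, hkn⟩ := mem_Icc.1 hk
    have hshift : n - n₀ - (n - k) = k - n₀ := by omega
    have hsplit : R ^ k = R ^ n₀ * R ^ (k - n₀) := by rw [← pow_add]; congr 1; omega
    rw [norm_mul, Real.norm_of_nonneg (hpos _).le]
    calc ‖g k‖ * a (n - k) ≤ c * R ^ k * (K * ε ^ (k - n₀) * a (n - n₀)) := by
          refine mul_le_mul ?_ ?_ (hpos _).le (by positivity)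
          · simpa [abs_of_pos hR] using hc k
          · simpa [hshift] using hKn (n - k) (by omega)
      _ = c * K * R ^ n₀ * a (n - n₀) * (R * ε) ^ (k - n₀) := by rw [hsplit, mul_pow]; ring
  rw [Real.norm_of_nonneg (hpos _).le]
  calc ‖∑ k ∈ Icc n₀ n, g k * a (n - k)‖
      ≤ ∑ k ∈ Icc n₀ n, c * K * R ^ n₀ * a (n - n₀) * (R * ε) ^ (k - n₀) :=
        (norm_sum_le _ _).trans (sum_le_sum hterm)
    _ = c * K * R ^ n₀ * a (n - n₀) * ∑ k ∈ Icc n₀ n, (R * ε) ^ (k - n₀) := by rw [mul_sum]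
    _ ≤ c * K * R ^ n₀ * a (n - n₀) * 2 := by
      have := hpos (n - n₀)
      gcongr
      exact sum_Icc_pow_sub_le_two (by positivity) hRε n₀ n
    _ = 2 * (c * K * R ^ n₀) * a (n - n₀) := by ring

theorem isBigO_pow_mul_eval_natCast (C : ℝ) (P : ℝ[X]) :
    (fun k : ℕ => C ^ k * P.eval (k : ℝ)) =O[atTop] fun k => (2 * C) ^ k := by
  have hdeg : P.degree ≤ (X ^ P.natDegree : ℝ[X]).degree := by
    simp [P.degree_le_natDegree]
  have hP : (fun k : ℕ => P.eval (k : ℝ)) =O[atTop] fun k => (2 : ℝ) ^ k := by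
    refine ((isBigO_atTop_of_degree_le _ _ hdeg).comp_tendsto tendsto_natCast_atTop_atTop).trans ?_
    simpa [Function.comp_def] using
      (isLittleO_pow_const_const_pow_of_one_lt (R := ℝ) P.natDegree one_lt_two).isBigO
  simpa only [mul_pow, mul_comm (2 : ℝ)] using (isBigO_refl (fun k : ℕ => C ^ k) atTop).mul hP

theorem geometric_poly_convolution_isBigO_general
    (a : ℕ → ℝ) (σ : ℝ) (hσ : 0 < σ)
    (hpos : ∀ n, 0 < a n) (hmono : Monotone a)
    (hr : (fun n => a (n - 1) / a n) =O[atTop] fun n => (n : ℝ) ^ (-σ))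
    (C : ℝ) (hC : 0 < C) (P : Polynomial ℝ)
    (n₀ : ℕ) :
    (fun n => ∑ k ∈ Finset.Icc n₀ n, C ^ k * P.eval (k : ℝ) * a (n - k))
      =O[atTop] fun n => a (n - n₀) := by
  have hratio : Tendsto (fun n => a n / a (n + 1)) atTop (𝓝 0) := by
    have h := hr.trans_tendsto ((tendsto_rpow_neg_atTop hσ).comp tendsto_natCast_atTop_atTop)
    simpa using (tendsto_add_atTop_iff_nat 1).2 h
  exact isBigO_sum_Icc_mul_sub hpos hmono hratio (by positivity) (isBigO_pow_mul_eval_natCast C P) n₀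

/-- ∑_{k=n₀}^n C^k P(k) a_{n-k} = O(a_{n-n₀}) for a positive
increasing rapidly growing sequence a and a polynomial P with nonnegative
coefficients. -/
theorem geometric_poly_convolution_isBigO
    (a : ℕ → ℝ) (σ : ℝ) (hσ : 0 < σ)
    (hpos : ∀ n, 0 < a n) (hmono : Monotone a)
    (hr : (fun n => a (n - 1) / a n) =O[atTop] fun n => (n : ℝ) ^ (-σ))
    (C : ℝ) (hC : 0 < C) (P : Polynomial ℝ) (hP : ∀ i, 0 ≤ P.coeff i)
    (n₀ : ℕ) :
    (fun n => ∑ k ∈ Finset.Icc n₀ n, C ^ k * P.eval (k : ℝ) * a (n - k))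
      =O[atTop] fun n => a (n - n₀) :=
  geometric_poly_convolution_isBigO_general a σ hσ hpos hmono hr C hC P n₀
end

section
/- The class B₀ of closed linear λ-terms with no closed proper subterms is in size-preserving bijection with Z × B₁, where B₁ is the class of linear λ-terms with exactly one free variable and no closed subterms, and Z contributes one unit of size. Concretely, the map t ↦ λx.t from { t : x ⊢ t, t has no closed subterm } to { closed linear terms with no closed proper subterm } is a bijection increasing size by exactly 1. -/
/-- Untyped λ-terms with named variables. -/
inductive Lam : Type
  | var : ℕ → Lam
  | app : Lam → Lam → Lam
  | lam : ℕ → Lam → Lam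
  deriving DecidableEq

/-- The subterm relation on λ-terms. -/
inductive Subtm : Lam → Lam → Prop
  | refl (t : Lam) : Subtm t t
  | appL {u t₁ t₂ : Lam} : Subtm u t₁ → Subtm u (Lam.app t₁ t₂)
  | appR {u t₁ t₂ : Lam} : Subtm u t₂ → Subtm u (Lam.app t₁ t₂)
  | lam {u t : Lam} {x : ℕ} : Subtm u t → Subtm u (Lam.lam x t)

/-- Linearity judgment `Γ ⊢ t`: every variable in the ordered context Γ is
used exactly once, with variable, application, abstraction and exchange
rules. -/
inductive Lin : List ℕ → Lam → Prop
  | var (x : ℕ) : Lin [x] (Lam.var x)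
  | app {Γ Δ : List ℕ} {t u : Lam} : Lin Γ t → Lin Δ u → Lin (Γ ++ Δ) (Lam.app t u)
  | lam {Γ : List ℕ} {x : ℕ} {t : Lam} : Lin (Γ ++ [x]) t → Lin Γ (Lam.lam x t)
  | exch {Γ Δ : List ℕ} {x y : ℕ} {t : Lam} :
      Lin (Γ ++ x :: y :: Δ) t → Lin (Γ ++ y :: x :: Δ) t

/-- Size of a λ-term: the number of its subterm occurrences. -/
def tsize : Lam → ℕ
  | Lam.var _ => 1
  | Lam.app t u => 1 + tsize t + tsize u
  | Lam.lam _ t => 1 + tsize t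

lemma subtm_size {s t : Lam} (h : Subtm s t) : tsize s ≤ tsize t := by
  induction h with
  | refl => exact le_refl _
  | appL _ ih => simp [tsize]; omega
  | appR _ ih => simp [tsize]; omega
  | lam _ ih => simp [tsize]; omega

lemma lin_var_aux {Γ : List ℕ} {v : Lam} (h : Lin Γ v) :
    ∀ y, v = Lam.var y → Γ = [y] := by
  induction h with
  | var x => intro y hv; cases hv; rfl
  | app _ _ _ _ => intro y hv; cases hv
  | lam _ _ => intro y hv; cases hv
  | exch h ih =>
      intro y hv
      exact absurd (congrArg List.length (ih y hv)) (by simp; omega)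

lemma lin_app_aux {Γ : List ℕ} {v : Lam} (h : Lin Γ v) :
    ∀ t u, v = Lam.app t u → Γ = [] → Lin [] t ∧ Lin [] u := by
  induction h with
  | var _ => intro t u hv; cases hv
  | app h1 h2 _ _ =>
      intro t u hv hΓ
      cases hv
      have := List.append_eq_nil_iff.mp hΓ
      rw [this.1] at h1; rw [this.2] at h2
      exact ⟨h1, h2⟩
  | lam _ _ => intro t u hv; cases hv
  | exch h ih =>
      intro t u hv hΓ
      exact absurd (congrArg List.length hΓ) (by simp)

lemma lin_lam_aux {Γ : List ℕ} {v : Lam} (h : Lin Γ v) :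
    ∀ x t, v = Lam.lam x t → Lin (Γ ++ [x]) t := by
  induction h with
  | var _ => intro x t hv; cases hv
  | app _ _ _ _ => intro x t hv; cases hv
  | lam h _ => intro x t hv; cases hv; exact h
  | exch h ih =>
      intro x t hv
      have h' := ih x t hv
      rw [List.append_assoc] at h' ⊢
      exact Lin.exch h'

/-- the map (x, t) ↦ λx.t is a size-(+1) bijection from
one-variable-open linear terms with no closed subterm onto closed linear terms
with no closed proper subterm. -/
theorem abstraction_bijection_bridgeless :
    (∀ (x : ℕ) (t : Lam), Lin [x] t → (∀ s, Subtm s t → ¬ Lin [] s) →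
      Lin [] (Lam.lam x t) ∧
      (∀ s, Subtm s (Lam.lam x t) → s ≠ Lam.lam x t → ¬ Lin [] s) ∧
      tsize (Lam.lam x t) = tsize t + 1) ∧
    (∀ (x₁ x₂ : ℕ) (t₁ t₂ : Lam),
      Lam.lam x₁ t₁ = Lam.lam x₂ t₂ → x₁ = x₂ ∧ t₁ = t₂) ∧
    (∀ s : Lam, Lin [] s → (∀ s', Subtm s' s → s' ≠ s → ¬ Lin [] s') →
      ∃ (x : ℕ) (t : Lam), Lin [x] t ∧ (∀ s', Subtm s' t → ¬ Lin [] s') ∧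
        s = Lam.lam x t) := by
  constructor
  · intro x t hlin hnoc
    refine ⟨Lin.lam (by simpa using hlin), ?_, by simp [tsize, Nat.add_comm]⟩
    intro s hs hne
    cases hs with
    | refl => exact absurd rfl hne
    | lam h => exact hnoc s h
  constructor
  · intro x₁ x₂ t₁ t₂ h
    cases h; exact ⟨rfl, rfl⟩
  · intro s hs hnc
    match s with
    | Lam.var y => exact absurd (lin_var_aux hs y rfl) (by simp)
    | Lam.app t u =>
        obtain ⟨ht, _⟩ := lin_app_aux hs t u rfl rfl
        exact absurd ht (hnc t (Subtm.appL (Subtm.refl t))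
          (fun h => by have := congrArg tsize h; simp [tsize] at this; omega))
    | Lam.lam x t =>
        refine ⟨x, t, by simpa using lin_lam_aux hs x t rfl, ?_, rfl⟩
        intro s' hs'
        refine hnc s' (Subtm.lam hs') ?_
        intro h
        have h1 := subtm_size hs'
        rw [h] at h1
        simp [tsize] at h1
end

section
/- Let b(z) be the formal power series with b(z) = z + 2z³ b(z) b'(z), b(0)=0, and let b̲(z) be the formal power series determined by b̲(z) = z − 2z⁴ + 2z³ b̲(z) + 2z⁴ b̲'(z). Then for all n, [z^n] b̲(z) ≤ [z^n] b(z), and for n = 3k+1 one has [z^n] b(z) ≥ 6^{k+1} Γ(k + 2/3) / (12 Γ(2/3)). -/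
/-!
Read coefficientwise, the equation for `b` is `b (n + 3) = 2 ∑_{i + j = n} b i (j + 1) b (j + 1)`
with `b 0, b 1, b 2 = 0, 1, 0`. Hence all coefficients of `b` are nonnegative, and the two
summands `(n, 0)` and `(1, n - 1)` alone give `b (n + 3) ≥ 2 (n + 1) b n` for `n ≠ 1`.
The equation for `b̲` is exactly this recursion with equality,
`b̲ (n + 3) = 2 (n + 1) b̲ n - 2 [n = 1]`, and `b̲` agrees with `b` up to degree 4, so `b̲ ≤ b`
by induction. Along `n = 3k + 1` the recursion reads `b̲ (3k + 4) = 2 (3k + 2) b̲ (3k + 1)` for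
`k ≥ 1`, which is also the recursion that `Γ (x + 1) = x Γ (x)` gives for the Gamma bound; at
`k = 0, 1` the bound is `1/2 ≤ 1` and `2 = 2`.
-/

open PowerSeries

noncomputable def psDeriv (b : PowerSeries ℝ) : PowerSeries ℝ :=
  PowerSeries.mk fun n => ((n + 1 : ℕ) : ℝ) * PowerSeries.coeff (n + 1) b

open Finset

@[simp]
theorem coeff_psDeriv (f : PowerSeries ℝ) (n : ℕ) :
    coeff n (psDeriv f) = (n + 1) * coeff (n + 1) f := by
  simp [psDeriv]

theorem coeff_X_mul_psDeriv (f : PowerSeries ℝ) (n : ℕ) :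
    coeff n (X * psDeriv f) = n * coeff n f := by
  cases n <;> simp

theorem coeff_two_mul {R : Type*} [Semiring R] (f : PowerSeries R) (n : ℕ) :
    coeff n (2 * f) = 2 * coeff n f := by
  rw [← map_ofNat C 2, coeff_C_mul]

theorem coeff_X_pow_mul_of_lt {R : Type*} [Semiring R] (f : PowerSeries R) {k n : ℕ} (h : n < k) :
    coeff n (X ^ k * f) = 0 := by
  rw [coeff_X_pow_mul', if_neg (by omega)]

def IsBridgelessSeries (b : PowerSeries ℝ) : Prop :=
  b = X + 2 * X ^ 3 * b * psDeriv b

def IsBridgelessLowerSeries (lb : PowerSeries ℝ) : Prop :=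
  lb = X - 2 * X ^ 4 + 2 * X ^ 3 * lb + 2 * X ^ 4 * psDeriv lb

namespace IsBridgelessSeries

variable {b : PowerSeries ℝ}

theorem eq_X_add_X_pow_three_mul (hb : IsBridgelessSeries b) :
    b = X + X ^ 3 * (2 * (b * psDeriv b)) :=
  hb.trans (by ring)

theorem coeff_of_lt_three (hb : IsBridgelessSeries b) {n : ℕ} (hn : n < 3) :
    coeff n b = coeff n (X : PowerSeries ℝ) := by
  rw [hb.eq_X_add_X_pow_three_mul, map_add, coeff_X_pow_mul_of_lt _ hn, add_zero]

theorem coeff_add_three (hb : IsBridgelessSeries b) (n : ℕ) :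
    coeff (n + 3) b =
      2 * ∑ p ∈ antidiagonal n, coeff p.1 b * ((p.2 + 1) * coeff (p.2 + 1) b) := by
  conv_lhs => rw [hb.eq_X_add_X_pow_three_mul]
  rw [map_add, coeff_X_pow_mul, coeff_X, if_neg (by omega), zero_add, coeff_two_mul, coeff_mul]
  simp only [coeff_psDeriv]

theorem coeff_nonneg (hb : IsBridgelessSeries b) (n : ℕ) : 0 ≤ coeff n b := by
  induction n using Nat.strong_induction_on with
  | _ n ih =>
    obtain hn | hn := lt_or_ge n 3
    · rw [hb.coeff_of_lt_three hn, coeff_X]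
      split_ifs <;> norm_num
    obtain ⟨m, rfl⟩ := Nat.exists_eq_add_of_le' hn
    rw [hb.coeff_add_three]
    refine mul_nonneg zero_le_two (sum_nonneg fun p hp => ?_)
    have hp := mem_antidiagonal.mp hp
    have := ih p.1 (by omega)
    have := ih (p.2 + 1) (by omega)
    positivity

theorem coeff_zero (hb : IsBridgelessSeries b) : coeff 0 b = 0 := by
  simp [hb.coeff_of_lt_three]

theorem coeff_one (hb : IsBridgelessSeries b) : coeff 1 b = 1 := by
  simp [hb.coeff_of_lt_three]

theorem coeff_four (hb : IsBridgelessSeries b) : coeff 4 b = 2 := by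
  rw [hb.coeff_add_three, Nat.sum_antidiagonal_succ]
  simp [hb.coeff_of_lt_three]

theorem two_mul_succ_mul_coeff_le (hb : IsBridgelessSeries b) {n : ℕ} (hn : n ≠ 1) :
    2 * (n + 1) * coeff n b ≤ coeff (n + 3) b := by
  obtain rfl | ⟨m, rfl⟩ : n = 0 ∨ ∃ m, n = m + 2 := by
    rcases n with _ | _ | m
    · exact .inl rfl
    · exact absurd rfl hn
    · exact .inr ⟨m, rfl⟩
  · simpa [hb.coeff_zero] using hb.coeff_nonneg 3
  have hsub : {(m + 2, 0), (1, m + 1)} ⊆ antidiagonal (m + 2) := by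
    simp only [insert_subset_iff, singleton_subset_iff, HasAntidiagonal.mem_antidiagonal]
    exact ⟨trivial, by omega⟩
  calc 2 * ((m + 2 : ℕ) + 1 : ℝ) * coeff (m + 2) b
      = 2 * ∑ p ∈ {(m + 2, 0), (1, m + 1)},
          coeff p.1 b * ((p.2 + 1) * coeff (p.2 + 1) b) := by
        rw [sum_pair (by simp), hb.coeff_one]
        push_cast
        ring
    _ ≤ coeff (m + 2 + 3) b := by
        rw [hb.coeff_add_three]
        refine mul_le_mul_of_nonneg_left (sum_le_sum_of_subset_of_nonneg hsub ?_) zero_le_two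
        intro p _ _
        have := hb.coeff_nonneg p.1
        have := hb.coeff_nonneg (p.2 + 1)
        positivity

end IsBridgelessSeries

noncomputable def gammaBound (k : ℕ) : ℝ :=
  6 ^ (k + 1) * Real.Gamma ((k : ℝ) + 2 / 3) / (12 * Real.Gamma (2 / 3))

theorem gammaBound_zero : gammaBound 0 = 1 / 2 := by
  have := (Real.Gamma_pos_of_pos (by norm_num : (0 : ℝ) < 2 / 3)).ne'
  rw [gammaBound, Nat.cast_zero, zero_add]
  field_simp
  norm_num

theorem gammaBound_succ (k : ℕ) : gammaBound (k + 1) = 2 * (3 * k + 2) * gammaBound k := by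
  have hΓ : Real.Gamma ((k + 1 : ℕ) + 2 / 3) = (k + 2 / 3) * Real.Gamma (k + 2 / 3) := by
    rw [Nat.cast_succ, add_right_comm, Real.Gamma_add_one (by positivity)]
  rw [gammaBound, gammaBound, hΓ]
  ring

namespace IsBridgelessLowerSeries

variable {lb : PowerSeries ℝ}

theorem eq_X_add_X_pow_three_mul (hlb : IsBridgelessLowerSeries lb) :
    lb = X + X ^ 3 * (2 * (lb + X * psDeriv lb) - 2 * X) :=
  hlb.trans (by ring)

theorem coeff_of_lt_three (hlb : IsBridgelessLowerSeries lb) {n : ℕ} (hn : n < 3) :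
    coeff n lb = coeff n (X : PowerSeries ℝ) := by
  rw [hlb.eq_X_add_X_pow_three_mul, map_add, coeff_X_pow_mul_of_lt _ hn, add_zero]

theorem coeff_add_three (hlb : IsBridgelessLowerSeries lb) (n : ℕ) :
    coeff (n + 3) lb = 2 * (n + 1) * coeff n lb - 2 * coeff n (X : PowerSeries ℝ) := by
  conv_lhs => rw [hlb.eq_X_add_X_pow_three_mul]
  rw [map_add, coeff_X_pow_mul, coeff_X, if_neg (by omega), zero_add, map_sub, coeff_two_mul,
    coeff_two_mul, map_add, coeff_X_mul_psDeriv]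
  ring

theorem coeff_add_three_of_ne_one (hlb : IsBridgelessLowerSeries lb) {n : ℕ} (hn : n ≠ 1) :
    coeff (n + 3) lb = 2 * (n + 1) * coeff n lb := by
  simp [hlb.coeff_add_three, coeff_X, hn]

theorem coeff_one (hlb : IsBridgelessLowerSeries lb) : coeff 1 lb = 1 := by
  simp [hlb.coeff_of_lt_three]

theorem coeff_four (hlb : IsBridgelessLowerSeries lb) : coeff 4 lb = 2 := by
  rw [hlb.coeff_add_three, hlb.coeff_one, coeff_X, if_pos rfl]
  norm_num

theorem coeff_le_coeff {b : PowerSeries ℝ} (hb : IsBridgelessSeries b)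
    (hlb : IsBridgelessLowerSeries lb) (n : ℕ) : coeff n lb ≤ coeff n b := by
  induction n using Nat.strong_induction_on with
  | _ n ih =>
    obtain hn | hn := lt_or_ge n 3
    · rw [hlb.coeff_of_lt_three hn, hb.coeff_of_lt_three hn]
    obtain ⟨m, rfl⟩ := Nat.exists_eq_add_of_le' hn
    rcases eq_or_ne m 1 with rfl | hm
    · rw [hlb.coeff_four, hb.coeff_four]
    calc coeff (m + 3) lb = 2 * (m + 1) * coeff m lb := hlb.coeff_add_three_of_ne_one hm
      _ ≤ 2 * (m + 1) * coeff m b := by gcongr; exact ih m (by omega)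
      _ ≤ coeff (m + 3) b := hb.two_mul_succ_mul_coeff_le hm

theorem gammaBound_le_coeff (hlb : IsBridgelessLowerSeries lb) (k : ℕ) :
    gammaBound k ≤ coeff (3 * k + 1) lb := by
  induction k with
  | zero => rw [gammaBound_zero, hlb.coeff_one]; norm_num
  | succ k ih =>
    rw [gammaBound_succ]
    rcases k with _ | k
    · rw [gammaBound_zero, hlb.coeff_four]; norm_num
    rw [show 3 * (k + 1 + 1) + 1 = 3 * (k + 1) + 1 + 3 by ring,
      hlb.coeff_add_three_of_ne_one (by omega)]
    push_cast
    rw [show 3 * ((k : ℝ) + 1) + 1 + 1 = 3 * (k + 1) + 2 by ring]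
    gcongr

end IsBridgelessLowerSeries

theorem bridgeless_lower_bound_general (b lb : PowerSeries ℝ)
    (hode : b = PowerSeries.X + 2 * PowerSeries.X ^ 3 * b * psDeriv b)
    (hlb : lb = PowerSeries.X - 2 * PowerSeries.X ^ 4 + 2 * PowerSeries.X ^ 3 * lb
        + 2 * PowerSeries.X ^ 4 * psDeriv lb) :
    (∀ n : ℕ, PowerSeries.coeff n lb ≤ PowerSeries.coeff n b) ∧
    (∀ k : ℕ, 6 ^ (k + 1) * Real.Gamma ((k : ℝ) + 2 / 3) / (12 * Real.Gamma (2 / 3))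
        ≤ PowerSeries.coeff (3 * k + 1) b) := by
  have hb : IsBridgelessSeries b := hode
  replace hlb : IsBridgelessLowerSeries lb := hlb
  have hle := hlb.coeff_le_coeff hb
  exact ⟨hle, fun k => (hlb.gammaBound_le_coeff k).trans (hle _)⟩

/-- the series b̲ defined by
b̲ = z − 2z⁴ + 2z³b̲ + 2z⁴b̲' is a coefficient-wise lower bound of the series b
defined by b = z + 2z³ b b' with b(0)=0, and consequently for n = 3k+1,
[zⁿ]b ≥ 6^{k+1} Γ(k+2/3)/(12 Γ(2/3)). -/
theorem bridgeless_lower_bound (b lb : PowerSeries ℝ)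
    (hode : b = PowerSeries.X + 2 * PowerSeries.X ^ 3 * b * psDeriv b)
    (h0 : PowerSeries.coeff 0 b = 0)
    (hlb : lb = PowerSeries.X - 2 * PowerSeries.X ^ 4 + 2 * PowerSeries.X ^ 3 * lb
        + 2 * PowerSeries.X ^ 4 * psDeriv lb) :
    (∀ n : ℕ, PowerSeries.coeff n lb ≤ PowerSeries.coeff n b) ∧
    (∀ k : ℕ, 6 ^ (k + 1) * Real.Gamma ((k : ℝ) + 2 / 3) / (12 * Real.Gamma (2 / 3))
        ≤ PowerSeries.coeff (3 * k + 1) b) :=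
  bridgeless_lower_bound_general b lb hode hlb
end

section
/- For the balanced-part operators B_k on ℤ[f,z,v] defined by B_k(η) = ∑_{i ≤ k+1, j} η̄_{j,i} v^j z^{2k−2(i−1)} f^i where η̄_{j,i} = [v^j f^i z^{2k−2(i−1)}] η: (a) each B_k is ℤ-linear; (b) if η₁ is k₁-admissible and η₂ is k₂-admissible, then η₁·η₂ is (k₁+k₂+1)-admissible and B_{k₁+k₂+1}(η₁ η₂) = B_{k₁}(η₁)·B_{k₂}(η₂). -/
/-- Variables of ℤ[f,z,v]: index 0 is f, index 1 is z, index 2 is v. -/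
abbrev P3 := MvPolynomial (Fin 3) ℤ

/-- The balanced-part operator B_k: keeps the monomials f^i z^l v^j with
i ≤ k+1 and l = 2k − 2(i−1). -/
noncomputable def balanced (k : ℤ) (η : P3) : P3 :=
  ∑ d ∈ η.support,
    if ((d 0 : ℤ) ≤ k + 1 ∧ (d 1 : ℤ) = 2 * k - 2 * ((d 0 : ℤ) - 1)) then
      MvPolynomial.monomial d (MvPolynomial.coeff d η)
    else 0

/-- k-admissibility: every monomial a f^i v^j z^l has
l ≥ max {0, 2k − 2(i−1)}. -/
def admissible (k : ℤ) (η : P3) : Prop :=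
  ∀ d ∈ η.support, max 0 (2 * k - 2 * ((d 0 : ℤ) - 1)) ≤ (d 1 : ℤ)

/-! Give `f`, `z`, `v` the weights `2`, `1`, `0`. A monomial `f^i z^l v^j` has weight `2i + l`,
so it is `k`-admissible iff its weight is at least `2k + 2` and balanced for `k` iff its weight is
exactly `2k + 2` (then `i ≤ k + 1` holds automatically). Thus `B_k` is the weighted homogeneous
component of weight `2k + 2`, hence linear, and multiplicativity is the fact that the lowest
weighted components of a product multiply, since `2(k₁ + k₂ + 1) + 2 = (2k₁ + 2) + (2k₂ + 2)`. -/

open MvPolynomial Finsupp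

namespace MvPolynomial

variable {σ R M : Type*} [CommSemiring R] [AddCommMonoid M] {w : σ → M} {m n : M}
  {p q : MvPolynomial σ R}

theorem le_weight_of_mem_support_mul [PartialOrder M] [IsOrderedAddMonoid M]
    (hp : ∀ d ∈ p.support, m ≤ weight w d) (hq : ∀ d ∈ q.support, n ≤ weight w d) :
    ∀ d ∈ (p * q).support, m + n ≤ weight w d := by
  classical
  intro d hd
  obtain ⟨a, ha, b, hb, rfl⟩ := Finset.mem_add.mp (support_mul p q hd)
  rw [map_add]
  exact add_le_add (hp a ha) (hq b hb)

theorem weightedHomogeneousComponent_mul_of_le_weight [LinearOrder M]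
    [IsOrderedCancelAddMonoid M] (hp : ∀ d ∈ p.support, m ≤ weight w d)
    (hq : ∀ d ∈ q.support, n ≤ weight w d) :
    weightedHomogeneousComponent w (m + n) (p * q) =
      weightedHomogeneousComponent w m p * weightedHomogeneousComponent w n q := by
  classical
  ext d
  simp only [coeff_weightedHomogeneousComponent, coeff_mul]
  split_ifs with hd
  · refine Finset.sum_congr rfl fun x hx => ?_
    rw [Finset.HasAntidiagonal.mem_antidiagonal] at hx
    by_cases hpx : coeff x.1 p = 0
    · simp [hpx]
    by_cases hqx : coeff x.2 q = 0
    · simp [hqx]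
    -- both weights are bounded below and add up to `m + n`, so both bounds are attained
    obtain ⟨hm, hn⟩ := (add_eq_add_iff_eq_and_eq (hp x.1 (mem_support_iff.mpr hpx))
      (hq x.2 (mem_support_iff.mpr hqx))).mp (by rw [← map_add, hx, hd])
    simp [← hm, ← hn]
  · refine (Finset.sum_eq_zero fun x hx => ?_).symm
    rw [Finset.HasAntidiagonal.mem_antidiagonal] at hx
    have hwx : ¬(weight w x.1 = m ∧ weight w x.2 = n) := fun h =>
      hd (by rw [← hx, map_add, h.1, h.2])
    rw [not_and_or] at hwx
    rcases hwx with h | h <;> simp [h]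

end MvPolynomial

def fzvWeight : Fin 3 → ℤ := ![2, 1, 0]

theorem weight_fzvWeight (d : Fin 3 →₀ ℕ) : weight fzvWeight d = 2 * (d 0 : ℤ) + d 1 := by
  simp [weight_apply, Finsupp.sum_fintype, Fin.sum_univ_three, fzvWeight, mul_comm]

theorem admissible_iff_le_weight (k : ℤ) (η : P3) :
    admissible k η ↔ ∀ d ∈ η.support, 2 * k + 2 ≤ weight fzvWeight d := by
  refine forall₂_congr fun d _ => ?_
  rw [weight_fzvWeight, max_le_iff]
  omega

theorem balanced_eq_weightedHomogeneousComponent (k : ℤ) (η : P3) :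
    balanced k η = weightedHomogeneousComponent fzvWeight (2 * k + 2) η := by
  classical
  rw [weightedHomogeneousComponent_apply, Finset.sum_filter, balanced]
  refine Finset.sum_congr rfl fun d _ => if_congr ?_ rfl rfl
  rw [weight_fzvWeight]
  omega

/-- balanced-part operators are linear, and multiplicative on
admissible polynomials: the product of a k₁-admissible and a k₂-admissible
polynomial is (k₁+k₂+1)-admissible with
B_{k₁+k₂+1}(η₁η₂) = B_{k₁}(η₁)·B_{k₂}(η₂). -/
theorem balanced_linear_and_multiplicative :
    (∀ (k : ℤ) (η₁ η₂ : P3),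
      balanced k (η₁ + η₂) = balanced k η₁ + balanced k η₂) ∧
    (∀ (k₁ k₂ : ℤ) (η₁ η₂ : P3), admissible k₁ η₁ → admissible k₂ η₂ →
      admissible (k₁ + k₂ + 1) (η₁ * η₂) ∧
      balanced (k₁ + k₂ + 1) (η₁ * η₂) = balanced k₁ η₁ * balanced k₂ η₂) := by
  refine ⟨fun k η₁ η₂ => by simp only [balanced_eq_weightedHomogeneousComponent, map_add],
    fun k₁ k₂ η₁ η₂ h₁ h₂ => ?_⟩
  rw [admissible_iff_le_weight] at h₁ h₂
  have hsum : 2 * (k₁ + k₂ + 1) + 2 = (2 * k₁ + 2) + (2 * k₂ + 2) := by ring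
  rw [admissible_iff_le_weight, balanced_eq_weightedHomogeneousComponent,
    balanced_eq_weightedHomogeneousComponent, balanced_eq_weightedHomogeneousComponent, hsum]
  exact ⟨le_weight_of_mem_support_mul h₁ h₂, weightedHomogeneousComponent_mul_of_le_weight h₁ h₂⟩
end
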